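/- arXiv:1806.10179 — 3 statements merged into one kernel-verified Lean document; each statement's English description precedes it below -/
import Mathlib

section
/- Let H be a real inner product space, let N ≥ 1, and for each t ∈ {1,…,N} let φ_t ∈ H with ‖φ_t‖ ≤ 1 and y_t ∈ {−1, +1}. Let λ > 0 and define the batch objective P(w) = (λ/2)‖w‖² + (1/N)∑_{t=1}^N max(0, 1 − y_t⟨w, φ_t⟩). Then every minimizer w* of P satisfies ‖w*‖ ≤ 1/√λ. -/
/-!
Shrinking the minimizer `w` to `s • w` with `s ∈ (0, 1)` lowers the regularizer by
`(λ/2)(1 - s²)‖w‖²`, while convexity of the data term `L` raises it by at most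
`(1 - s)(L 0 - L w)`. Optimality of `w`, divided by `1 - s` and with `s → 1`, gives
`λ‖w‖² ≤ L 0 - L w`; for the averaged hinge loss `L 0 ≤ 1` and `L w ≥ 0`.
-/

open scoped RealInnerProductSpace
open Set Filter Topology

theorem ConvexOn.fun_finset_sum {𝕜 E β ι : Type*} [Semiring 𝕜] [PartialOrder 𝕜]
    [AddCommMonoid E] [AddCommMonoid β] [PartialOrder β] [IsOrderedAddMonoid β] [SMul 𝕜 E]
    [Module 𝕜 β] {s : Set E} (hs : Convex 𝕜 s) {t : Finset ι} {f : ι → E → β}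
    (hf : ∀ i ∈ t, ConvexOn 𝕜 s (f i)) : ConvexOn 𝕜 s fun x => ∑ i ∈ t, f i x := by
  rw [← Finset.sum_fn]
  exact Finset.sum_induction f (ConvexOn 𝕜 s) (fun _ _ => ConvexOn.add)
    (convexOn_const (0 : β) hs) hf

theorem convexOn_max_zero_one_sub_mul_inner {H : Type*} [NormedAddCommGroup H]
    [InnerProductSpace ℝ H] (φ : H) (y : ℝ) :
    ConvexOn ℝ univ fun v : H => max 0 (1 - y * ⟪v, φ⟫) := by
  have haffine : ConvexOn ℝ univ fun v : H => 1 - y * ⟪v, φ⟫ :=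
    ((convexOn_const 1 convex_univ).sub
      (LinearMap.concaveOn (y • innerₛₗ ℝ φ) convex_univ)).congr
      fun v _ => by simp [real_inner_comm]
  exact (convexOn_const 0 convex_univ).sup haffine

theorem ConvexOn.mul_sq_norm_le_of_isMinOn {E : Type*} [NormedAddCommGroup E] [NormedSpace ℝ E]
    {L : E → ℝ} (hL : ConvexOn ℝ univ L) {lam : ℝ} {w : E}
    (hw : IsMinOn (fun v => lam / 2 * ‖v‖ ^ 2 + L v) univ w) :
    lam * ‖w‖ ^ 2 ≤ L 0 - L w := by
  have shrink : ∀ s ∈ Ioo (0 : ℝ) 1, lam / 2 * ‖w‖ ^ 2 * (1 + s) ≤ L 0 - L w := by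
    rintro s ⟨hs0, hs1⟩
    have hconv : L (s • w) ≤ s * L w + (1 - s) * L 0 := by
      simpa using hL.2 (mem_univ w) (mem_univ 0) hs0.le (sub_nonneg.2 hs1.le) (add_sub_cancel s 1)
    have hmin : lam / 2 * ‖w‖ ^ 2 + L w ≤ lam / 2 * ‖s • w‖ ^ 2 + L (s • w) :=
      isMinOn_univ_iff.1 hw (s • w)
    rw [norm_smul, Real.norm_of_nonneg hs0.le] at hmin
    have : (1 - s) * (lam / 2 * ‖w‖ ^ 2 * (1 + s)) ≤ (1 - s) * (L 0 - L w) := by nlinarith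
    exact le_of_mul_le_mul_left this (sub_pos.2 hs1)
  have hlim : Tendsto (fun s => lam / 2 * ‖w‖ ^ 2 * (1 + s)) (𝓝[<] 1)
      (𝓝 (lam / 2 * ‖w‖ ^ 2 * (1 + 1))) :=
    ((continuous_const.mul (continuous_const.add continuous_id)).tendsto 1).mono_left
      nhdsWithin_le_nhds
  linarith [le_of_tendsto hlim (eventually_of_mem (Ioo_mem_nhdsLT zero_lt_one) shrink)]

theorem svm_minimizer_norm_bound_general
    {H : Type*} [NormedAddCommGroup H] [InnerProductSpace ℝ H]
    (N : ℕ)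
    (φ : ℕ → H) (y : ℕ → ℝ) (lam : ℝ) (hlam : 0 < lam)
    (P : H → ℝ)
    (hP : ∀ v, P v = lam / 2 * ‖v‖ ^ 2
        + (1 / (N : ℝ)) * ∑ t ∈ Finset.Icc 1 N, max 0 (1 - y t * ⟪v, φ t⟫))
    (wstar : H) (hstar : ∀ v, P wstar ≤ P v) :
    ‖wstar‖ ≤ 1 / Real.sqrt lam := by
  set L : H → ℝ := fun v => (1 / (N : ℝ)) * ∑ t ∈ Finset.Icc 1 N, max 0 (1 - y t * ⟪v, φ t⟫)
  have hL : ConvexOn ℝ univ L :=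
    (ConvexOn.fun_finset_sum convex_univ fun t _ =>
      convexOn_max_zero_one_sub_mul_inner (φ t) (y t)).smul (by positivity)
  have hL0 : L 0 ≤ 1 := by
    simp only [L, one_div, inner_zero_left, mul_zero, sub_zero, max_eq_right zero_le_one,
      Finset.sum_const, Nat.card_Icc, add_tsub_cancel_right, nsmul_eq_mul, mul_one]
    exact inv_mul_le_one
  have hLw : 0 ≤ L wstar :=
    mul_nonneg (by positivity) (Finset.sum_nonneg fun t _ => le_max_left _ _)
  have hmin : IsMinOn (fun v => lam / 2 * ‖v‖ ^ 2 + L v) univ wstar :=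
    isMinOn_univ_iff.2 fun v => by simpa only [hP] using hstar v
  have hnorm : lam * ‖wstar‖ ^ 2 ≤ 1 := by linarith [hL.mul_sq_norm_le_of_isMinOn hmin]
  rw [one_div, ← Real.sqrt_inv, Real.le_sqrt (norm_nonneg _) (inv_nonneg.2 hlam.le), ← one_div,
    le_div_iff₀' hlam]
  exact hnorm

/-- Every minimizer of the regularized hinge-loss SVM objective has norm at
most `1 / √λ`. -/
theorem svm_minimizer_norm_bound
    {H : Type*} [NormedAddCommGroup H] [InnerProductSpace ℝ H]
    (N : ℕ) (hN : 1 ≤ N)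
    (φ : ℕ → H) (y : ℕ → ℝ) (lam : ℝ) (hlam : 0 < lam)
    (hφ : ∀ t, 1 ≤ t → t ≤ N → ‖φ t‖ ≤ 1)
    (hy : ∀ t, 1 ≤ t → t ≤ N → y t = -1 ∨ y t = 1)
    (P : H → ℝ)
    (hP : ∀ v, P v = lam / 2 * ‖v‖ ^ 2
        + (1 / (N : ℝ)) * ∑ t ∈ Finset.Icc 1 N, max 0 (1 - y t * ⟪v, φ t⟫))
    (wstar : H) (hstar : ∀ v, P wstar ≤ P v) :
    ‖wstar‖ ≤ 1 / Real.sqrt lam :=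
  svm_minimizer_norm_bound_general N φ y lam hlam P hP wstar hstar
end

section
/- Let H be a real inner product space, λ > 0, G ≥ 0, U ≥ 0, and N ≥ 1. For t ∈ {1,…,N} let f_t : H → ℝ, g_t, E_t ∈ H, and w_t ∈ H satisfy: (i) w_{t+1} = w_t − (1/(λt))(g_t − E_t); (ii) for all v ∈ H, f_t(v) ≥ f_t(w_t) + ⟨g_t, v − w_t⟩ + (λ/2)‖v − w_t‖²; (iii) ‖g_t − E_t‖ ≤ G; (iv) ‖w_t‖ ≤ U. Then for every u ∈ H with ‖u‖ ≤ U, (1/N)∑_{t=1}^N f_t(w_t) − (1/N)∑_{t=1}^N f_t(u) ≤ G²(ln N + 1)/(2λN) + 2U·(1/N)∑_{t=1}^N ‖E_t‖. -/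
open scoped RealInnerProductSpace
open Finset

/-! With step size `1 / (λ t)`, expanding `‖w (t+1) - u‖²` turns the strong-convexity inequality
at `w t` into
`f t (w t) - f t u ≤ Φ t - Φ (t+1) + ‖g t - E t‖² / (2 λ t) + ⟪E t, w t - u⟫`
for the potential `Φ t = λ (t - 1) / 2 * ‖w t - u‖²`: the strong-convexity term `λ/2 ‖w t - u‖²`
is exactly what lowers the coefficient `λ t / 2` of the step to `λ (t - 1) / 2`. Summing, the
potentials telescope from `Φ 1 = 0`, the gradient terms give a harmonic sum `≤ ln N + 1`, and
Cauchy–Schwarz with `‖w t - u‖ ≤ 2U` bounds the error terms. -/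

lemma sum_Icc_one_div_le_log_add_one (N : ℕ) :
    ∑ t ∈ Icc 1 N, (1 : ℝ) / t ≤ Real.log N + 1 := by
  have h := harmonic_le_one_add_log N
  simp only [harmonic_eq_sum_Icc, Rat.cast_sum, Rat.cast_inv, Rat.cast_natCast] at h
  simpa [one_div, add_comm] using h

section Descent

variable {H : Type*} [NormedAddCommGroup H] [InnerProductSpace ℝ H]

lemma two_mul_inner_eq_norm_sub_sq_sub_norm_step_sq (η : ℝ) (w d u : H) :
    2 * η * ⟪d, w - u⟫ = ‖w - u‖ ^ 2 - ‖w - η • d - u‖ ^ 2 + η ^ 2 * ‖d‖ ^ 2 := by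
  rw [sub_right_comm w, norm_sub_sq_real (w - u), real_inner_smul_right, norm_smul, mul_pow,
    Real.norm_eq_abs, sq_abs, real_inner_comm]
  ring

lemma sub_le_inner_sub_of_strongly_convex_subgradient {f : H → ℝ} {lam : ℝ} {g w : H}
    (hf : ∀ v, f v ≥ f w + ⟪g, v - w⟫ + lam / 2 * ‖v - w‖ ^ 2) (u : H) :
    f w - f u ≤ ⟪g, w - u⟫ - lam / 2 * ‖w - u‖ ^ 2 := by
  have h := hf u
  rw [← neg_sub w u, inner_neg_right, norm_neg] at h
  linarith

lemma sub_le_of_perturbed_step {f : H → ℝ} {lam t : ℝ} (hlt : 0 < lam * t) {g e w w' : H}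
    (hstep : w' = w - (1 / (lam * t)) • (g - e))
    (hf : ∀ v, f v ≥ f w + ⟪g, v - w⟫ + lam / 2 * ‖v - w‖ ^ 2) (u : H) :
    f w - f u ≤ lam * (t - 1) / 2 * ‖w - u‖ ^ 2 - lam * t / 2 * ‖w' - u‖ ^ 2
      + ‖g - e‖ ^ 2 / (2 * lam * t) + ⟪e, w - u⟫ := by
  have hdescent := sub_le_inner_sub_of_strongly_convex_subgradient hf u
  have hsplit : ⟪g, w - u⟫ = ⟪g - e, w - u⟫ + ⟪e, w - u⟫ := by rw [inner_sub_left]; ring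
  have hstep_inner : ⟪g - e, w - u⟫ = lam * t / 2 * (‖w - u‖ ^ 2 - ‖w' - u‖ ^ 2)
      + ‖g - e‖ ^ 2 / (2 * lam * t) := by
    generalize hη_def : 1 / (lam * t) = η at hstep
    have h := two_mul_inner_eq_norm_sub_sq_sub_norm_step_sq η w (g - e) u
    rw [← hstep] at h
    have hη : lam * t * η = 1 := hη_def ▸ mul_one_div_cancel hlt.ne'
    have hB : ‖g - e‖ ^ 2 / (2 * lam * t) = η / 2 * ‖g - e‖ ^ 2 := by rw [← hη_def]; ring
    rw [hB]
    linear_combination lam * t / 2 * h + (η / 2 * ‖g - e‖ ^ 2 - ⟪g - e, w - u⟫) * hη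
  linarith

theorem perturbed_ogd_sum_sub_le {lam G U : ℝ} (hlam : 0 < lam) {N : ℕ} {f : ℕ → H → ℝ}
    {g E w : ℕ → H}
    (hrec : ∀ t, 1 ≤ t → t ≤ N → w (t + 1) = w t - (1 / (lam * t)) • (g t - E t))
    (hconv : ∀ t, 1 ≤ t → t ≤ N → ∀ v : H,
        f t v ≥ f t (w t) + ⟪g t, v - w t⟫ + lam / 2 * ‖v - w t‖ ^ 2)
    (hGbound : ∀ t, 1 ≤ t → t ≤ N → ‖g t - E t‖ ≤ G)
    (hWbound : ∀ t, 1 ≤ t → t ≤ N → ‖w t‖ ≤ U) {u : H} (hu : ‖u‖ ≤ U) :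
    ∑ t ∈ Icc 1 N, (f t (w t) - f t u)
      ≤ G ^ 2 / (2 * lam) * ∑ t ∈ Icc 1 N, (1 : ℝ) / t + 2 * U * ∑ t ∈ Icc 1 N, ‖E t‖ := by
  set Φ : ℕ → ℝ := fun t => lam * ((t : ℝ) - 1) / 2 * ‖w t - u‖ ^ 2 with hΦ
  have hstep : ∀ t ∈ Icc 1 N, f t (w t) - f t u
      ≤ (Φ t - Φ (t + 1)) + (G ^ 2 / (2 * lam) * (1 / t) + 2 * U * ‖E t‖) := by
    intro t ht
    obtain ⟨ht1, htN⟩ := mem_Icc.mp ht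
    have hlt : 0 < lam * t := mul_pos hlam (by exact_mod_cast ht1)
    have h := sub_le_of_perturbed_step hlt (hrec t ht1 htN) (hconv t ht1 htN) u
    have hG : ‖g t - E t‖ ^ 2 / (2 * lam * t) ≤ G ^ 2 / (2 * lam) * (1 / t) := by
      rw [div_mul_div_comm, mul_one]
      gcongr
      exact hGbound t ht1 htN
    have hE : ⟪E t, w t - u⟫ ≤ 2 * U * ‖E t‖ := calc
      _ ≤ ‖E t‖ * ‖w t - u‖ := real_inner_le_norm _ _
      _ ≤ ‖E t‖ * (2 * U) := by
        gcongr
        linarith [norm_sub_le (w t) u, hWbound t ht1 htN]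
      _ = _ := by ring
    simp only [hΦ]
    push_cast
    linarith
  have htel : ∑ t ∈ Icc 1 N, (Φ t - Φ (t + 1)) = Φ 1 - Φ (N + 1) := by
    rw [← Ico_add_one_right_eq_Icc, ← neg_sub, ← sum_Ico_sub Φ (by omega : 1 ≤ N + 1),
      ← sum_neg_distrib]
    simp only [neg_sub]
  have hΦ1 : Φ 1 = 0 := by simp [hΦ]
  have hΦN : 0 ≤ Φ (N + 1) := by
    simp only [hΦ, Nat.cast_add, Nat.cast_one, add_sub_cancel_right]
    positivity
  calc ∑ t ∈ Icc 1 N, (f t (w t) - f t u)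
      ≤ ∑ t ∈ Icc 1 N, ((Φ t - Φ (t + 1)) + (G ^ 2 / (2 * lam) * (1 / t) + 2 * U * ‖E t‖)) :=
        sum_le_sum hstep
    _ ≤ G ^ 2 / (2 * lam) * ∑ t ∈ Icc 1 N, (1 : ℝ) / t + 2 * U * ∑ t ∈ Icc 1 N, ‖E t‖ := by
        rw [sum_add_distrib, htel, hΦ1, sum_add_distrib, ← mul_sum, ← mul_sum]
        linarith

end Descent

theorem perturbed_ogd_strongly_convex_regret_general
    {H : Type*} [NormedAddCommGroup H] [InnerProductSpace ℝ H]
    (lam G U : ℝ) (hlam : 0 < lam)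
    (N : ℕ)
    (f : ℕ → H → ℝ) (g E w : ℕ → H)
    (hrec : ∀ t, 1 ≤ t → t ≤ N → w (t + 1) = w t - (1 / (lam * t)) • (g t - E t))
    (hconv : ∀ t, 1 ≤ t → t ≤ N → ∀ v : H,
        f t v ≥ f t (w t) + ⟪g t, v - w t⟫ + lam / 2 * ‖v - w t‖ ^ 2)
    (hGbound : ∀ t, 1 ≤ t → t ≤ N → ‖g t - E t‖ ≤ G)
    (hWbound : ∀ t, 1 ≤ t → t ≤ N → ‖w t‖ ≤ U) :
    ∀ u : H, ‖u‖ ≤ U →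
      (1 / (N : ℝ)) * ∑ t ∈ Finset.Icc 1 N, f t (w t)
        - (1 / (N : ℝ)) * ∑ t ∈ Finset.Icc 1 N, f t u
      ≤ G ^ 2 * (Real.log N + 1) / (2 * lam * N)
        + 2 * U * ((1 / (N : ℝ)) * ∑ t ∈ Finset.Icc 1 N, ‖E t‖) := by
  intro u hu
  have hregret := perturbed_ogd_sum_sub_le hlam hrec hconv hGbound hWbound hu
  have hharmonic := sum_Icc_one_div_le_log_add_one N
  rw [← mul_sub, ← sum_sub_distrib]
  calc 1 / (N : ℝ) * ∑ t ∈ Icc 1 N, (f t (w t) - f t u)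
      ≤ 1 / (N : ℝ) * (G ^ 2 / (2 * lam) * (Real.log N + 1) + 2 * U * ∑ t ∈ Icc 1 N, ‖E t‖) := by
        gcongr
        exact hregret.trans (by gcongr)
    _ = _ := by ring

/-- Perturbed online subgradient descent for λ-strongly convex objectives:
SGD with learning rate `1/(λt)` and gradient errors `E t` has average regret
at most `G²(ln N + 1)/(2λN)` plus `2U` times the average error norm. -/
theorem perturbed_ogd_strongly_convex_regret
    {H : Type*} [NormedAddCommGroup H] [InnerProductSpace ℝ H]
    (lam G U : ℝ) (hlam : 0 < lam) (hG : 0 ≤ G) (hU : 0 ≤ U)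
    (N : ℕ) (hN : 1 ≤ N)
    (f : ℕ → H → ℝ) (g E w : ℕ → H)
    (hrec : ∀ t, 1 ≤ t → t ≤ N → w (t + 1) = w t - (1 / (lam * t)) • (g t - E t))
    (hconv : ∀ t, 1 ≤ t → t ≤ N → ∀ v : H,
        f t v ≥ f t (w t) + ⟪g t, v - w t⟫ + lam / 2 * ‖v - w t‖ ^ 2)
    (hGbound : ∀ t, 1 ≤ t → t ≤ N → ‖g t - E t‖ ≤ G)
    (hWbound : ∀ t, 1 ≤ t → t ≤ N → ‖w t‖ ≤ U) :
    ∀ u : H, ‖u‖ ≤ U →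
      (1 / (N : ℝ)) * ∑ t ∈ Finset.Icc 1 N, f t (w t)
        - (1 / (N : ℝ)) * ∑ t ∈ Finset.Icc 1 N, f t u
      ≤ G ^ 2 * (Real.log N + 1) / (2 * lam * N)
        + 2 * U * ((1 / (N : ℝ)) * ∑ t ∈ Finset.Icc 1 N, ‖E t‖) :=
  perturbed_ogd_strongly_convex_regret_general lam G U hlam N f g E w hrec hconv hGbound hWbound
end

section
/- Let d ≥ 1, γ > 0, x_i ≠ x_j points of ℝ^d (Euclidean space), and α_i > 0 > α_j. Define m : ℝ^d → ℝ by m(z) = α_i·exp(−γ‖z − x_i‖²) + α_j·exp(−γ‖z − x_j‖²). Then the function z ↦ |m(z)| attains a strictly positive global maximum on ℝ^d, and every global maximizer z* of z ↦ |m(z)| has the form z* = h·x_i + (1 − h)·x_j for some h with h < 0 or h > 1. -/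
/-!
The Gaussian combination `m` is continuous and vanishes at infinity, and it is not identically
zero (`m xᵢ - m xⱼ = (αᵢ - αⱼ)(1 - k(xᵢ, xⱼ))`), so `|m|` attains a positive maximum. A maximizer
of `|m|` is a local extremum of `m`, so the gradient of `m` vanishes there:
`aᵢ (z - xᵢ) + aⱼ (z - xⱼ) = 0` with `aᵢ = αᵢ k(xᵢ, z) > 0 > aⱼ = αⱼ k(xⱼ, z)`. Hence
`z = h xᵢ + (1 - h) xⱼ` with `h = aᵢ / (aᵢ + aⱼ)`, and opposite signs of the weights put `h`
outside `[0, 1]`.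
-/

open Filter Topology Set
open scoped RealInnerProductSpace

theorem isLocalExtr_of_forall_abs_le {X α : Type*} [TopologicalSpace X] [AddCommGroup α]
    [LinearOrder α] [IsOrderedAddMonoid α] {f : X → α} {x : X} (h : ∀ y, |f y| ≤ |f x|) :
    IsLocalExtr f x := by
  refine IsExtrOn.isLocalExtr (s := univ) ?_ univ_mem
  rcases le_or_gt 0 (f x) with hx | hx
  · exact IsMaxOn.isExtr fun y _ => (le_abs_self _).trans ((h y).trans (abs_of_nonneg hx).le)
  · refine IsMinOn.isExtr fun y _ => ?_
    have hy : |f y| ≤ -f x := abs_of_neg hx ▸ h y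
    exact (le_neg.1 hy).trans (neg_abs_le _)

theorem Continuous.exists_forall_abs_le_of_tendsto_cocompact_zero {X : Type*}
    [TopologicalSpace X] {f : X → ℝ} (hf : Continuous f) (hlim : Tendsto f (cocompact X) (𝓝 0))
    {x₀ : X} (hx₀ : f x₀ ≠ 0) : ∃ x, ∀ y, |f y| ≤ |f x| := by
  have habs : Tendsto (|f ·|) (cocompact X) (𝓝 0) := by simpa using hlim.abs
  exact hf.abs.exists_forall_ge' x₀ (habs.eventually_le_const (abs_pos.2 hx₀))

theorem exists_eq_smul_add_one_sub_smul_of_smul_sub_add_smul_sub_eq_zero {𝕜 V : Type*} [Field 𝕜]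
    [LinearOrder 𝕜] [IsStrictOrderedRing 𝕜] [AddCommGroup V] [Module 𝕜 V] {a b : 𝕜} {x y z : V}
    (ha : 0 < a) (hb : b < 0) (hxy : x ≠ y) (h : a • (z - x) + b • (z - y) = 0) :
    ∃ t : 𝕜, (t < 0 ∨ 1 < t) ∧ z = t • x + (1 - t) • y := by
  have hz : (a + b) • z = a • x + b • y := by linear_combination (norm := module) h
  have hab : a + b ≠ 0 := by
    intro hab
    have hxy' : a • (x - y) = 0 := by
      rw [hab, zero_smul, eq_neg_of_add_eq_zero_right hab] at hz
      linear_combination (norm := module) -hz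
    exact hxy (sub_eq_zero.1 ((smul_eq_zero.1 hxy').resolve_left ha.ne'))
  refine ⟨a / (a + b), ?_, ?_⟩
  · rcases hab.lt_or_gt with hneg | hpos
    · exact Or.inl (div_neg_of_pos_of_neg ha hneg)
    · exact Or.inr ((one_lt_div hpos).2 (by linarith))
  · apply smul_right_injective V hab
    have e : (a + b) * (1 - a / (a + b)) = b := by field_simp; ring
    simp only [hz, smul_add, smul_smul, mul_div_cancel₀ _ hab, e]

section GaussianKernel

variable {E : Type*} [NormedAddCommGroup E]

noncomputable def gaussianKernel (γ : ℝ) (x z : E) : ℝ := Real.exp (-γ * ‖z - x‖ ^ 2)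

variable {γ : ℝ}

theorem gaussianKernel_pos (x z : E) : 0 < gaussianKernel γ x z := Real.exp_pos _

@[simp]
theorem gaussianKernel_self (x : E) : gaussianKernel γ x x = 1 := by simp [gaussianKernel]

theorem gaussianKernel_comm (x z : E) : gaussianKernel γ x z = gaussianKernel γ z x := by
  simp only [gaussianKernel, norm_sub_rev]

theorem gaussianKernel_lt_one (hγ : 0 < γ) {x z : E} (hxz : x ≠ z) : gaussianKernel γ x z < 1 := by
  have hd : 0 < ‖z - x‖ := norm_pos_iff.2 (sub_ne_zero.2 hxz.symm)
  exact Real.exp_lt_one_iff.2 (by rw [neg_mul]; exact neg_neg_of_pos (by positivity))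

@[fun_prop]
theorem continuous_gaussianKernel (x : E) : Continuous (gaussianKernel γ x) := by
  unfold gaussianKernel; fun_prop

theorem tendsto_gaussianKernel_cocompact [ProperSpace E] (hγ : 0 < γ) (x : E) :
    Tendsto (gaussianKernel γ x) (cocompact E) (𝓝 0) := by
  have hdist : Tendsto (‖· - x‖) (cocompact E) atTop :=
    tendsto_norm_cocompact_atTop.comp (Homeomorph.subRight x).map_cocompact.le
  have hexp : Tendsto (fun t : ℝ => -γ * t ^ 2) atTop atBot := by
    simpa only [Function.comp_def, neg_mul] using
      tendsto_neg_atTop_atBot.comp ((tendsto_pow_atTop two_ne_zero).const_mul_atTop hγ)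
  exact Real.tendsto_exp_atBot.comp (hexp.comp hdist)

theorem exists_gaussianKernel_combination_ne_zero (hγ : 0 < γ) {xi xj : E} (hx : xi ≠ xj)
    {αi αj : ℝ} (hα : αi ≠ αj) :
    ∃ z, αi * gaussianKernel γ xi z + αj * gaussianKernel γ xj z ≠ 0 := by
  by_contra! h
  have hk := gaussianKernel_lt_one hγ hx
  have hzero : (αi - αj) * (1 - gaussianKernel γ xi xj) = 0 := by
    have hi := h xi
    have hj := h xj
    rw [gaussianKernel_self, gaussianKernel_comm xj] at hi
    rw [gaussianKernel_self] at hj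
    linear_combination hi - hj
  rcases mul_eq_zero.1 hzero with hα' | hk'
  · exact hα (sub_eq_zero.1 hα')
  · linarith

variable [InnerProductSpace ℝ E]

theorem hasFDerivAt_gaussianKernel (γ : ℝ) (x z : E) :
    HasFDerivAt (gaussianKernel γ x) ((-2 * γ * gaussianKernel γ x z) • innerSL ℝ (z - x)) z := by
  refine (((hasFDerivAt_id z).sub_const x).norm_sq.const_mul (-γ)).exp.congr_fderiv ?_
  ext v
  simp only [gaussianKernel, id_eq, map_sub, ContinuousLinearMap.comp_id, smul_apply,
    sub_apply, coe_innerSL_apply, nsmul_eq_mul, Nat.cast_ofNat, smul_eq_mul]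
  ring

theorem IsLocalExtr.gaussianKernel_combination_critical (hγ : γ ≠ 0) {αi αj : ℝ} {xi xj z : E}
    (h : IsLocalExtr (fun z => αi * gaussianKernel γ xi z + αj * gaussianKernel γ xj z) z) :
    (αi * gaussianKernel γ xi z) • (z - xi) + (αj * gaussianKernel γ xj z) • (z - xj) = 0 := by
  set w := (αi * gaussianKernel γ xi z) • (z - xi) + (αj * gaussianKernel γ xj z) • (z - xj)
  have hderiv : HasFDerivAt (fun z => αi * gaussianKernel γ xi z + αj * gaussianKernel γ xj z)
      ((-2 * γ) • innerSL ℝ w) z := by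
    refine (((hasFDerivAt_gaussianKernel γ xi z).const_mul αi).add
      ((hasFDerivAt_gaussianKernel γ xj z).const_mul αj)).congr_fderiv ?_
    ext v
    simp only [w, add_apply, smul_apply, coe_innerSL_apply, smul_eq_mul, inner_add_left,
      real_inner_smul_left]
    ring
  have hw : -2 * γ * ⟪w, w⟫ = 0 := by simpa using congr($(h.hasFDerivAt_eq_zero hderiv) w)
  simpa [hγ] using hw

end GaussianKernel

theorem gaussian_merge_opposite_sign_maximizer_outside_segment_general
    (d : ℕ) (γ : ℝ) (hγ : 0 < γ)
    (xi xj : EuclideanSpace ℝ (Fin d)) (hx : xi ≠ xj)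
    (αi αj : ℝ) (hαi : 0 < αi) (hαj : αj < 0)
    (m : EuclideanSpace ℝ (Fin d) → ℝ)
    (hm : ∀ z, m z = αi * Real.exp (-γ * ‖z - xi‖ ^ 2)
        + αj * Real.exp (-γ * ‖z - xj‖ ^ 2)) :
    (∃ z : EuclideanSpace ℝ (Fin d), 0 < |m z| ∧ ∀ v, |m v| ≤ |m z|) ∧
    (∀ zstar : EuclideanSpace ℝ (Fin d), (∀ v, |m v| ≤ |m zstar|) →
      ∃ h : ℝ, (h < 0 ∨ 1 < h) ∧ zstar = h • xi + (1 - h) • xj) := by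
  obtain rfl : m = fun z => αi * gaussianKernel γ xi z + αj * gaussianKernel γ xj z := funext hm
  refine ⟨?_, fun zstar hmax => ?_⟩
  · obtain ⟨z₀, hz₀⟩ := exists_gaussianKernel_combination_ne_zero hγ hx (hαj.trans hαi).ne'
    have hlim := ((tendsto_gaussianKernel_cocompact hγ xi).const_mul αi).add
      ((tendsto_gaussianKernel_cocompact hγ xj).const_mul αj)
    simp only [mul_zero, add_zero] at hlim
    obtain ⟨z, hz⟩ :=
      (by fun_prop : Continuous _).exists_forall_abs_le_of_tendsto_cocompact_zero hlim hz₀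
    exact ⟨z, (abs_pos.2 hz₀).trans_le (hz z₀), hz⟩
  · exact exists_eq_smul_add_one_sub_smul_of_smul_sub_add_smul_sub_eq_zero
      (mul_pos hαi (gaussianKernel_pos _ _)) (mul_neg_of_neg_of_pos hαj (gaussianKernel_pos _ _))
      hx ((isLocalExtr_of_forall_abs_le hmax).gaussianKernel_combination_critical hγ.ne')

/-- For coefficients of opposite sign, `z ↦ |m(z)|` with
`m(z) = αᵢ exp(-γ‖z-xᵢ‖²) + αⱼ exp(-γ‖z-xⱼ‖²)` attains a strictly positive
global maximum, and every global maximizer lies on the line through `xᵢ` and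
`xⱼ` outside the segment between them. -/
theorem gaussian_merge_opposite_sign_maximizer_outside_segment
    (d : ℕ) (hd : 1 ≤ d) (γ : ℝ) (hγ : 0 < γ)
    (xi xj : EuclideanSpace ℝ (Fin d)) (hx : xi ≠ xj)
    (αi αj : ℝ) (hαi : 0 < αi) (hαj : αj < 0)
    (m : EuclideanSpace ℝ (Fin d) → ℝ)
    (hm : ∀ z, m z = αi * Real.exp (-γ * ‖z - xi‖ ^ 2)
        + αj * Real.exp (-γ * ‖z - xj‖ ^ 2)) :
    (∃ z : EuclideanSpace ℝ (Fin d), 0 < |m z| ∧ ∀ v, |m v| ≤ |m z|) ∧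
    (∀ zstar : EuclideanSpace ℝ (Fin d), (∀ v, |m v| ≤ |m zstar|) →
      ∃ h : ℝ, (h < 0 ∨ 1 < h) ∧ zstar = h • xi + (1 - h) • xj) :=
  gaussian_merge_opposite_sign_maximizer_outside_segment_general d γ hγ xi xj hx αi αj hαi hαj m hm
end
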